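/- Let n, m ≥ 1, k ≥ 1, let X ⊆ ℤ^n be a finite nonempty set, let a_1, …, a_m ∈ ℤ^n, b_1, …, b_m ∈ ℤ, d_1, …, d_m ∈ ℤ with d_i > 0, define μ_i(x) = (b_i − a_i·x)/d_i and assume 0 ≤ μ_i(x) ≤ 1 for all x ∈ X and all i; let M be a positive integer divisible by every d_i. Let 0 = α_0 < α_1 < ⋯ < α_k = 1 and for each i = 1, …, n let c_{i1}, c_{i2} : [0,1] → ℝ be affine on each subinterval [α_{j−1}, α_j]; set L_α(x) = Σ_i c_{i1}(α) x_i and U_α(x) = Σ_i c_{i2}(α) x_i. Say that y ∈ X dominates x ∈ X in the combined fuzzy ordering if L_α(x) ≤ L_α(y) and U_α(x) ≤ U_α(y) for every α ∈ [0,1] and min_i μ_i(x) ≤ min_i μ_i(y), with at least one of these inequalities strict for some α or in the membership values. Let T = {(x, y) ∈ X × ℤ : 0 ≤ y ≤ M, y ≤ M·μ_i(x) for all i}. Then x ∈ X is not dominated by any element of X in the combined fuzzy ordering if and only if (x, M·min_{1≤i≤m} μ_i(x)) is a nondominated solution of the (2(k+1)+1)-objective maximization problem of (L_{α_0}, U_{α_0},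 …, L_{α_k}, U_{α_k}, (x,y) ↦ y) over T. -/

import Mathlib

/-!
A function that is affine on each piece `[α_{j-1}, α_j]` of the partition takes, at every
`β ∈ [0, 1]`, a value between two of its values at breakpoints. Applied to `L_β y - L_β x` and
`U_β y - U_β x`, comparing the fuzzy objectives for all `β ∈ [0, 1]` is the same as comparing
them at `α_0, …, α_k`. For fixed `x`, the largest feasible `y` with `(x, y) ∈ T` is
`M · min_i μ_i(x)`, an integer because `d_i ∣ M`; so maximizing `y` over `T` is maximizing
`min_i μ_i(x)` over `X`.
-/

/-- `s` is a nondominated solution of the multiobjective maximization problem of the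
objective functions `f i` over the feasible set `S`. -/
def Nondominated {σ ι : Type*} (S : Set σ) (f : ι → σ → ℝ) (s : σ) : Prop :=
  s ∈ S ∧ ¬ ∃ t ∈ S, (∀ i, f i s ≤ f i t) ∧ (∃ j, f j s < f j t)

open Set

theorem Fin.exists_mem_Icc_castSucc_succ {γ : Type*} [LinearOrder γ] {k : ℕ}
    (f : Fin (k + 2) → γ) {β : γ} (hβ : β ∈ Icc (f 0) (f (Fin.last _))) :
    ∃ j : Fin (k + 1), β ∈ Icc (f j.castSucc) (f j.succ) := by
  induction k with
  | zero => exact ⟨0, hβ⟩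
  | succ k ih =>
    by_cases hle : β ≤ f (Fin.last (k + 1)).castSucc
    · obtain ⟨j, hj⟩ := ih (fun i => f i.castSucc) ⟨hβ.1, hle⟩
      exact ⟨j.castSucc, by simpa only [Fin.succ_castSucc] using hj⟩
    · exact ⟨Fin.last _, (not_le.1 hle).le, by simpa only [Fin.succ_last] using hβ.2⟩

theorem affine_mem_uIcc {s t l r β : ℝ} (hβ : β ∈ Icc l r) :
    s * β + t ∈ uIcc (s * l + t) (s * r + t) := by
  rw [mem_uIcc]
  rcases le_total 0 s with hs | hs
  · exact Or.inl ⟨by nlinarith [hβ.1], by nlinarith [hβ.2]⟩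
  · exact Or.inr ⟨by nlinarith [hβ.2], by nlinarith [hβ.1]⟩

def IsPiecewiseAffine {k : ℕ} (α : Fin (k + 1) → ℝ) (g : ℝ → ℝ) : Prop :=
  ∀ j : Fin k, ∃ s t : ℝ, ∀ β ∈ Icc (α j.castSucc) (α j.succ), g β = s * β + t

namespace IsPiecewiseAffine

variable {k : ℕ} {α : Fin (k + 1) → ℝ} {g : ℝ → ℝ}

theorem sub {g₁ g₂ : ℝ → ℝ} (h₁ : IsPiecewiseAffine α g₁) (h₂ : IsPiecewiseAffine α g₂) :
    IsPiecewiseAffine α (fun β => g₁ β - g₂ β) := by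
  intro j
  obtain ⟨s₁, t₁, hg₁⟩ := h₁ j
  obtain ⟨s₂, t₂, hg₂⟩ := h₂ j
  exact ⟨s₁ - s₂, t₁ - t₂, fun β hβ => by simp only [hg₁ β hβ, hg₂ β hβ]; ring⟩

theorem sum_mul {ι : Type*} (s : Finset ι) {c : ι → ℝ → ℝ}
    (hc : ∀ i, IsPiecewiseAffine α (c i)) (w : ι → ℝ) :
    IsPiecewiseAffine α (fun β => ∑ i ∈ s, c i β * w i) := by
  intro j
  choose a b hab using fun i => hc i j
  refine ⟨∑ i ∈ s, a i * w i, ∑ i ∈ s, b i * w i, fun β hβ => ?_⟩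
  rw [Finset.sum_mul, ← Finset.sum_add_distrib]
  exact Finset.sum_congr rfl fun i _ => by rw [hab i β hβ]; ring

theorem exists_le_and_exists_ge (hg : IsPiecewiseAffine α g) {β : ℝ}
    (hβ : β ∈ Icc (α 0) (α (Fin.last k))) :
    (∃ j, g (α j) ≤ g β) ∧ ∃ j, g β ≤ g (α j) := by
  cases k with
  | zero =>
    obtain rfl : β = α 0 := le_antisymm hβ.2 hβ.1
    exact ⟨⟨0, le_rfl⟩, ⟨0, le_rfl⟩⟩
  | succ k =>
    obtain ⟨j, hj⟩ := Fin.exists_mem_Icc_castSucc_succ α hβ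
    obtain ⟨s, t, hst⟩ := hg j
    have hjle : α j.castSucc ≤ α j.succ := hj.1.trans hj.2
    have hmem := affine_mem_uIcc (s := s) (t := t) hj
    rw [← hst β hj, ← hst _ ⟨le_rfl, hjle⟩, ← hst _ ⟨hjle, le_rfl⟩, mem_uIcc] at hmem
    rcases hmem with ⟨hl, hr⟩ | ⟨hr, hl⟩
    · exact ⟨⟨_, hl⟩, ⟨_, hr⟩⟩
    · exact ⟨⟨_, hr⟩, ⟨_, hl⟩⟩

theorem forall_le_iff {g₁ g₂ : ℝ → ℝ} (hg : IsPiecewiseAffine α (fun β => g₂ β - g₁ β))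
    (hα : Monotone α) :
    (∀ β ∈ Icc (α 0) (α (Fin.last k)), g₁ β ≤ g₂ β) ↔ ∀ j, g₁ (α j) ≤ g₂ (α j) := by
  refine ⟨fun h j => h _ ⟨hα (Fin.zero_le j), hα (Fin.le_last j)⟩, fun h β hβ => ?_⟩
  obtain ⟨j, hj⟩ := (hg.exists_le_and_exists_ge hβ).1
  exact sub_nonneg.1 ((sub_nonneg.2 (h j)).trans hj)

theorem exists_lt_iff {g₁ g₂ : ℝ → ℝ} (hg : IsPiecewiseAffine α (fun β => g₂ β - g₁ β))
    (hα : Monotone α) :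
    (∃ β ∈ Icc (α 0) (α (Fin.last k)), g₁ β < g₂ β) ↔ ∃ j, g₁ (α j) < g₂ (α j) := by
  refine ⟨fun ⟨β, hβ, h⟩ => ?_, fun ⟨j, h⟩ => ⟨_, ⟨hα (Fin.zero_le j), hα (Fin.le_last j)⟩, h⟩⟩
  obtain ⟨j, hj⟩ := (hg.exists_le_and_exists_ge hβ).2
  exact ⟨j, sub_pos.1 ((sub_pos.2 h).trans_le hj)⟩

end IsPiecewiseAffine

theorem exists_intCast_eq_mul_inf' {ι : Type*} {s : Finset ι} (hs : s.Nonempty) (q d : ι → ℤ)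
    {M : ℤ} (hdiv : ∀ i ∈ s, d i ∣ M) :
    ∃ w : ℤ, (w : ℝ) = M * s.inf' hs (fun i => (q i : ℝ) / d i) := by
  obtain ⟨i, hi, hinf⟩ := Finset.exists_mem_eq_inf' hs fun i => (q i : ℝ) / d i
  obtain ⟨e, he⟩ := hdiv i hi
  refine ⟨M / d i * q i, ?_⟩
  rw [hinf, he]
  rcases eq_or_ne (d i) 0 with hd | hd
  · simp [hd]
  · rw [Int.mul_ediv_cancel_left _ hd]
    push_cast
    field_simp

theorem isGreatest_mul_inf' {ι : Type*} [Fintype ι] (hι : (Finset.univ : Finset ι).Nonempty)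
    (μ : ι → ℝ) (hμ : ∀ i, 0 ≤ μ i ∧ μ i ≤ 1) {M w : ℤ} (hM : 0 ≤ M)
    (hw : (w : ℝ) = M * Finset.univ.inf' hι μ) :
    IsGreatest {v : ℤ | 0 ≤ v ∧ v ≤ M ∧ ∀ i, (v : ℝ) ≤ M * μ i} w := by
  obtain ⟨i₀, -, hi₀⟩ := Finset.exists_mem_eq_inf' hι μ
  have hMR : (0 : ℝ) ≤ M := by exact_mod_cast hM
  refine ⟨⟨?_, ?_, fun i => ?_⟩, fun v ⟨_, _, hv⟩ => ?_⟩
  · have : (0 : ℝ) ≤ w := by rw [hw, hi₀]; exact mul_nonneg hMR (hμ i₀).1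
    exact_mod_cast this
  · have : (w : ℝ) ≤ M := by rw [hw, hi₀]; exact mul_le_of_le_one_right hMR (hμ i₀).2
    exact_mod_cast this
  · rw [hw]
    exact mul_le_mul_of_nonneg_left (Finset.inf'_le _ (Finset.mem_univ i)) hMR
  · have : (v : ℝ) ≤ w := by rw [hw, hi₀]; exact hv i₀
    exact_mod_cast this

theorem nondominated_iff_of_isGreatest {σ ι : Type*} {X : Set σ} {T : Set (σ × ℤ)}
    {F : Option ι → σ × ℤ → ℝ} {f : ι → σ → ℝ} (hF_none : ∀ p, F none p = p.2)
    (hF_some : ∀ i p, F (some i) p = f i p.1) (h : σ → ℤ) (hTX : ∀ p ∈ T, p.1 ∈ X)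
    (hT : ∀ y ∈ X, IsGreatest {w | (y, w) ∈ T} (h y)) {x : σ} (hx : x ∈ X) :
    Nondominated T F (x, h x) ↔
      ¬ ∃ y ∈ X, ((∀ i, f i x ≤ f i y) ∧ h x ≤ h y) ∧
        ((∃ i, f i x < f i y) ∨ h x < h y) := by
  simp only [Nondominated, Option.forall, Option.exists, hF_none, hF_some, Int.cast_le,
    Int.cast_lt, Prod.exists]
  constructor
  · rintro ⟨-, hnd⟩ ⟨y, hy, ⟨hf, hh⟩, hlt⟩
    exact hnd ⟨y, h y, (hT y hy).1, ⟨hh, hf⟩, hlt.symm⟩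
  · refine fun hnd => ⟨(hT x hx).1, ?_⟩
    rintro ⟨y, w, hyw, ⟨hxw, hf⟩, hlt⟩
    have hy := hTX _ hyw
    have hw : w ≤ h y := (hT y hy).2 hyw
    exact hnd ⟨y, hy, ⟨hf, hxw.trans hw⟩, hlt.symm.imp_right fun hlt => hlt.trans_le hw⟩

theorem stmt14 (n m k : ℕ) (hm : 1 ≤ m)
    (X : Set (Fin n → ℤ))
    (a : Fin m → Fin n → ℤ) (b : Fin m → ℤ) (d : Fin m → ℤ)
    (μ : Fin m → (Fin n → ℤ) → ℝ)
    (hμdef : ∀ i x, μ i x = ((b i : ℝ) - ∑ j, (a i j : ℝ) * (x j : ℝ)) / (d i : ℝ))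
    (hμ01 : ∀ x ∈ X, ∀ i, 0 ≤ μ i x ∧ μ i x ≤ 1)
    (M : ℤ) (hM : 0 < M) (hdiv : ∀ i, d i ∣ M)
    (α : Fin (k + 1) → ℝ) (hα0 : α 0 = 0) (hαk : α (Fin.last k) = 1)
    (hmono : StrictMono α)
    (c1 c2 : Fin n → ℝ → ℝ)
    (haff1 : ∀ i, ∀ j : Fin k, ∃ s t : ℝ,
      ∀ β ∈ Set.Icc (α j.castSucc) (α j.succ), c1 i β = s * β + t)
    (haff2 : ∀ i, ∀ j : Fin k, ∃ s t : ℝ,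
      ∀ β ∈ Set.Icc (α j.castSucc) (α j.succ), c2 i β = s * β + t)
    (L U : ℝ → (Fin n → ℤ) → ℝ)
    (hL : ∀ β x, L β x = ∑ i, c1 i β * (x i : ℝ))
    (hU : ∀ β x, U β x = ∑ i, c2 i β * (x i : ℝ))
    (minμ : (Fin n → ℤ) → ℝ)
    (hminμ : ∀ x, minμ x =
      Finset.univ.inf' (Finset.univ_nonempty_iff.mpr (Fin.pos_iff_nonempty.mp hm))
        (fun i => μ i x))
    (T : Set ((Fin n → ℤ) × ℤ))
    (hT : T = {p | p.1 ∈ X ∧ 0 ≤ p.2 ∧ p.2 ≤ M ∧ ∀ i, (p.2 : ℝ) ≤ (M : ℝ) * μ i p.1})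
    (x : Fin n → ℤ) (hx : x ∈ X)
    (yx : ℤ) (hyx : (yx : ℝ) = (M : ℝ) * minμ x) :
    (¬ ∃ y ∈ X,
        ((∀ β ∈ Set.Icc (0 : ℝ) 1, L β x ≤ L β y ∧ U β x ≤ U β y) ∧ minμ x ≤ minμ y) ∧
        ((∃ β ∈ Set.Icc (0 : ℝ) 1, L β x < L β y ∨ U β x < U β y) ∨ minμ x < minμ y)) ↔
      Nondominated T
        (fun o : Option (Fin (k + 1) × Bool) => fun p =>
          match o with
          | none => (p.2 : ℝ)
          | some jb => if jb.2 then U (α jb.1) p.1 else L (α jb.1) p.1)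
        (x, yx) := by
  have hscaled : ∀ z, ∃ w : ℤ, (w : ℝ) = M * minμ z := fun z => by
    simpa only [hminμ, hμdef, Int.cast_sub, Int.cast_sum, Int.cast_mul] using
      exists_intCast_eq_mul_inf' _ (fun i => b i - ∑ j, a i j * z j) d fun i _ => hdiv i
  choose h hh using hscaled
  obtain rfl : yx = h x := by exact_mod_cast hyx.trans (hh x).symm
  have hgreatest : ∀ y ∈ X, IsGreatest {w | (y, w) ∈ T} (h y) := fun y hy => by
    simpa only [hT, mem_ofPred_eq, hy, true_and] using isGreatest_mul_inf' _ _ (hμ01 y hy) hM.le ((hh y).trans (by rw [hminμ]))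
  have hI : Icc (0 : ℝ) 1 = Icc (α 0) (α (Fin.last k)) := by rw [hα0, hαk]
  have hLdiff : ∀ y, IsPiecewiseAffine α (fun β => L β y - L β x) := fun y => by
    simpa only [hL] using (IsPiecewiseAffine.sum_mul _ haff1 _).sub (.sum_mul _ haff1 _)
  have hUdiff : ∀ y, IsPiecewiseAffine α (fun β => U β y - U β x) := fun y => by
    simpa only [hU] using (IsPiecewiseAffine.sum_mul _ haff2 _).sub (.sum_mul _ haff2 _)
  have hMR : (0 : ℝ) < M := by exact_mod_cast hM
  refine Iff.trans ?_ (nondominated_iff_of_isGreatest (fun _ => rfl)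
    (f := fun (jb : Fin (k + 1) × Bool) p => if jb.2 then U (α jb.1) p else L (α jb.1) p)
    (fun _ _ => rfl) h (fun p hp => (hT ▸ hp).1) hgreatest hx).symm
  refine not_congr (exists_congr fun y => and_congr_right fun _ => ?_)
  have hle : h x ≤ h y ↔ minμ x ≤ minμ y := by
    rw [← Int.cast_le (R := ℝ), hh, hh, mul_le_mul_iff_right₀ hMR]
  have hlt : h x < h y ↔ minμ x < minμ y := by
    rw [← Int.cast_lt (R := ℝ), hh, hh, mul_lt_mul_iff_right₀ hMR]
  simp only [hI, hle, hlt, (hLdiff y).forall_le_iff hmono.monotone,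
    (hUdiff y).forall_le_iff hmono.monotone, (hLdiff y).exists_lt_iff hmono.monotone,
    (hUdiff y).exists_lt_iff hmono.monotone, Prod.forall, Prod.exists, Bool.forall_bool,
    Bool.exists_bool, forall_and, exists_or, and_or_left, Bool.false_eq_true, ↓reduceIte]
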